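/- arXiv:1108.3198 — 5 statements merged into one kernel-verified Lean document; each statement's English description precedes it below -/
import Mathlib

section
/- Let D be a finite set, k a positive integer, and X a symmetric subset of D^k (meaning τ∘x ∈ X for every x ∈ X and every permutation τ of the coordinates). Let f : X → ℂ be normal on X, i.e. for any two conjugate permutations τ, τ′ ∈ S_k one has Σ_{x ∈ X_τ} f(x) = Σ_{x ∈ X_{τ′}} f(x), where X_τ is the set of tuples in X constant on each cycle of τ. Then Σ_{x ∈ X̄} f(x) = Σ_{[τ] ∈ C_k} (−1)^{k−l(τ)} C(τ) · Σ_{x ∈ X_τ} f(x), where X̄ is the set of tuples in X with pairwise distinct coordinates, C_k is a set of representatives of the conjugacy classes of S_k, l(τ) is the number of cycles of τ (counting fixed points), and C(τ) is the number of permutations of S_k conjugate to τ. -/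
open Finset

/-- The number of cycles of a permutation of `Fin k`, counting each fixed point
as a (trivial) cycle of length `1`. -/
def numCycles {k : ℕ} (τ : Equiv.Perm (Fin k)) : ℕ :=
  τ.cycleType.card + (k - τ.support.card)

lemma card_le_support {k : ℕ} (σ : Equiv.Perm (Fin k)) :
    Multiset.card σ.cycleType ≤ σ.support.card := by
  rw [← Equiv.Perm.sum_cycleType]
  have := Multiset.card_nsmul_le_sum (s := σ.cycleType) (a := 1)
    (fun x hx => le_trans (by norm_num) (Equiv.Perm.two_le_of_mem_cycleType hx))
  simpa using this

lemma support_le {k : ℕ} (σ : Equiv.Perm (Fin k)) : σ.support.card ≤ k := by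
  simpa using Finset.card_le_univ σ.support

lemma neg_one_pow_eq_sign {k : ℕ} (σ : Equiv.Perm (Fin k)) :
    ((-1 : ℂ)) ^ (k - numCycles σ) = ((Equiv.Perm.sign σ : ℤ) : ℂ) := by
  have h1 : Multiset.card σ.cycleType ≤ σ.support.card := card_le_support σ
  have h2 : σ.support.card ≤ k := support_le σ
  have hs : σ.cycleType.sum = σ.support.card := Equiv.Perm.sum_cycleType σ
  have hexp : k - numCycles σ = σ.support.card - Multiset.card σ.cycleType := by
    unfold numCycles; omega
  have hsign := Equiv.Perm.sign_of_cycleType σ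
  rw [hexp]
  have h3 : ((Equiv.Perm.sign σ : ℤ) : ℂ) =
      (-1 : ℂ) ^ (σ.cycleType.sum + Multiset.card σ.cycleType) := by
    rw [hsign]; push_cast; ring_nf
  rw [h3, hs, show σ.support.card + Multiset.card σ.cycleType
      = (σ.support.card - Multiset.card σ.cycleType) + 2 * Multiset.card σ.cycleType by omega,
    pow_add, pow_mul]
  norm_num

lemma cond_iff {D : Type*} {k : ℕ} (x : Fin k → D) (σ : Equiv.Perm (Fin k)) :
    (∀ i j, σ.SameCycle i j → x i = x j) ↔ ∀ i, x (σ i) = x i := by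
  constructor
  · intro h i
    exact (h i (σ i) ⟨1, by simp⟩).symm
  · intro h i j hij
    obtain ⟨n, -, -, hn⟩ := Equiv.Perm.SameCycle.exists_pow_eq σ hij
    subst hn
    clear hij
    induction n with
    | zero => simp
    | succ m ih =>
      rw [pow_succ', Equiv.Perm.mul_apply, h]
      exact ih

open scoped Classical in
lemma stab_sum {D : Type*} [DecidableEq D] {k : ℕ} (x : Fin k → D) :
    ∑ σ ∈ Finset.univ.filter
        (fun σ : Equiv.Perm (Fin k) => ∀ i j, σ.SameCycle i j → x i = x j),
      ((Equiv.Perm.sign σ : ℤ) : ℂ) =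
    if Function.Injective x then 1 else 0 := by
  by_cases hinj : Function.Injective x
  · rw [if_pos hinj]
    have : Finset.univ.filter
        (fun σ : Equiv.Perm (Fin k) => ∀ i j, σ.SameCycle i j → x i = x j) = {1} := by
      ext σ
      simp only [Finset.mem_filter, Finset.mem_univ, true_and, Finset.mem_singleton]
      rw [cond_iff]
      constructor
      · intro h
        exact Equiv.ext fun i => by simpa using hinj (h i)
      · rintro rfl i; simp
    rw [this]; simp
  · rw [if_neg hinj]
    rw [Function.not_injective_iff] at hinj
    obtain ⟨i, j, hxij, hij⟩ := hinj
    set t := Equiv.swap i j with ht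
    have hxt : ∀ m, x (t m) = x m := by
      intro m
      rcases eq_or_ne m i with rfl | hmi
      · rw [ht, Equiv.swap_apply_left]; exact hxij.symm
      rcases eq_or_ne m j with rfl | hmj
      · rw [ht, Equiv.swap_apply_right]; exact hxij
      · rw [ht, Equiv.swap_apply_of_ne_of_ne hmi hmj]
    have hmem : ∀ σ : Equiv.Perm (Fin k),
        (∀ m, x (σ m) = x m) → ∀ m, x ((σ * t) m) = x m := by
      intro σ hσ m
      rw [Equiv.Perm.mul_apply, hσ, hxt]
    set S := ∑ σ ∈ Finset.univ.filter
        (fun σ : Equiv.Perm (Fin k) => ∀ i j, σ.SameCycle i j → x i = x j),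
      ((Equiv.Perm.sign σ : ℤ) : ℂ) with hS
    have key : S = -S := by
      rw [hS]
      rw [← Finset.sum_neg_distrib]
      apply Finset.sum_equiv (Equiv.mulRight t)
      · intro σ
        simp only [Finset.mem_filter, Finset.mem_univ, true_and, Equiv.coe_mulRight]
        rw [cond_iff, cond_iff]
        constructor
        · exact hmem σ
        · intro h
          have := hmem _ h
          simpa [mul_assoc, ht] using this
      · intro σ _
        simp only [Equiv.coe_mulRight]
        rw [Equiv.Perm.sign_mul, Equiv.Perm.sign_swap hij]
        push_cast
        ring
    linear_combination key / 2

lemma numCycles_conj {k : ℕ} {τ σ : Equiv.Perm (Fin k)} (h : IsConj τ σ) :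
    numCycles σ = numCycles τ := by
  have hc : τ.cycleType = σ.cycleType := Equiv.Perm.isConj_iff_cycleType_eq.mp h
  have hs : τ.support.card = σ.support.card := by
    rw [← Equiv.Perm.sum_cycleType, ← Equiv.Perm.sum_cycleType, hc]
  unfold numCycles
  rw [hc, hs]

open scoped Classical in
/-- **Sieving over conjugacy classes.** If `X ⊆ D^k` is symmetric (stable under
permutation of coordinates) and `f` is normal on `X` (the sum of `f` over `X_τ`
only depends on the conjugacy class of `τ`), then
`Σ_{x ∈ X̄} f(x) = Σ_{[τ] ∈ C_k} (-1)^{k-l(τ)} C(τ) Σ_{x ∈ X_τ} f(x)`,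
where the sum is over a set `R` of representatives of the conjugacy classes of `S_k`
and `C(τ)` is the number of permutations conjugate to `τ`. -/
theorem sieve_conjugacy_classes {D : Type*} [DecidableEq D] {k : ℕ} (hk : 0 < k)
    (X : Finset (Fin k → D))
    (hX : ∀ x ∈ X, ∀ τ : Equiv.Perm (Fin k), (x ∘ τ) ∈ X)
    (f : (Fin k → D) → ℂ)
    (hf : ∀ τ τ' : Equiv.Perm (Fin k), IsConj τ τ' →
      ∑ x ∈ X.filter (fun x => ∀ i j, τ.SameCycle i j → x i = x j), f x =
      ∑ x ∈ X.filter (fun x => ∀ i j, τ'.SameCycle i j → x i = x j), f x)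
    (R : Finset (Equiv.Perm (Fin k)))
    (hR : ∀ σ : Equiv.Perm (Fin k), ∃! τ, τ ∈ R ∧ IsConj σ τ) :
    ∑ x ∈ X.filter (fun x => Function.Injective x), f x =
      ∑ τ ∈ R, (-1 : ℂ) ^ (k - numCycles τ) *
        ((Finset.univ.filter (fun σ : Equiv.Perm (Fin k) => IsConj τ σ)).card : ℂ) *
        ∑ x ∈ X.filter (fun x => ∀ i j, τ.SameCycle i j → x i = x j), f x := by
  set e : Equiv.Perm (Fin k) → ℂ := fun σ => (-1 : ℂ) ^ (k - numCycles σ) with he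
  set Sf : Equiv.Perm (Fin k) → ℂ :=
    fun τ => ∑ x ∈ X.filter (fun x => ∀ i j, τ.SameCycle i j → x i = x j), f x with hSf
  have step1 : ∀ τ ∈ R,
      e τ * ((Finset.univ.filter (fun σ : Equiv.Perm (Fin k) => IsConj τ σ)).card : ℂ) * Sf τ
      = ∑ σ ∈ Finset.univ.filter (fun σ : Equiv.Perm (Fin k) => IsConj τ σ), e σ * Sf σ := by
    intro τ hτ
    have hconst : ∑ σ ∈ Finset.univ.filter (fun σ : Equiv.Perm (Fin k) => IsConj τ σ),
        e σ * Sf σ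
        = ∑ _σ ∈ Finset.univ.filter (fun σ : Equiv.Perm (Fin k) => IsConj τ σ),
        e τ * Sf τ := by
      apply Finset.sum_congr rfl
      intro σ hσ
      have hc : IsConj τ σ := (Finset.mem_filter.mp hσ).2
      have h1 : e σ = e τ := by rw [he]; simp only; rw [numCycles_conj hc]
      have h2 : Sf σ = Sf τ := hf σ τ (isConj_comm.mp hc)
      rw [h1, h2]
    rw [hconst, Finset.sum_const, nsmul_eq_mul]
    ring
  have hrep : ∀ σ : Equiv.Perm (Fin k), (hR σ).choose ∈ R ∧ IsConj σ (hR σ).choose :=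
    fun σ => (hR σ).choose_spec.1
  have hrepu : ∀ σ y, y ∈ R → IsConj σ y → y = (hR σ).choose :=
    fun σ y h1 h2 => (hR σ).choose_spec.2 y ⟨h1, h2⟩
  have step2 :
      ∑ τ ∈ R, ∑ σ ∈ Finset.univ.filter (fun σ : Equiv.Perm (Fin k) => IsConj τ σ), e σ * Sf σ
      = ∑ σ : Equiv.Perm (Fin k), e σ * Sf σ := by
    rw [← Finset.sum_fiberwise_of_maps_to (g := fun σ => (hR σ).choose)
      (fun σ _ => (hrep σ).1) (fun σ => e σ * Sf σ)]
    refine Finset.sum_congr rfl fun τ hτ => Finset.sum_congr ?_ fun _ _ => rfl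
    ext σ
    simp only [Finset.mem_filter, Finset.mem_univ, true_and]
    constructor
    · intro h
      exact (hrepu σ τ hτ h.symm).symm
    · intro h
      rw [← h]
      exact (hrep σ).2.symm
  have step3 : ∑ σ : Equiv.Perm (Fin k), e σ * Sf σ
      = ∑ x ∈ X.filter (fun x => Function.Injective x), f x := by
    have hsign : ∀ σ : Equiv.Perm (Fin k), e σ = ((Equiv.Perm.sign σ : ℤ) : ℂ) :=
      fun σ => neg_one_pow_eq_sign σ
    calc ∑ σ : Equiv.Perm (Fin k), e σ * Sf σ
        = ∑ σ : Equiv.Perm (Fin k), ∑ x ∈ X,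
            if (∀ i j, σ.SameCycle i j → x i = x j) then e σ * f x else 0 := by
          apply Finset.sum_congr rfl
          intro σ _
          rw [hSf]
          simp only
          rw [Finset.sum_filter, Finset.mul_sum]
          exact Finset.sum_congr rfl fun x _ => (mul_ite _ _ _ _).trans (by simp)
      _ = ∑ x ∈ X, ∑ σ : Equiv.Perm (Fin k),
            if (∀ i j, σ.SameCycle i j → x i = x j) then e σ * f x else 0 :=
          Finset.sum_comm
      _ = ∑ x ∈ X, (if Function.Injective x then 1 else 0) * f x := by
          apply Finset.sum_congr rfl
          intro x _
          rw [← Finset.sum_filter, ← Finset.sum_mul, ← stab_sum x]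
          exact congrArg (· * f x) (Finset.sum_congr rfl fun σ _ => hsign σ)
      _ = ∑ x ∈ X.filter (fun x => Function.Injective x), f x := by
          rw [Finset.sum_filter]
          exact Finset.sum_congr rfl fun x _ => by split <;> simp
  rw [← step3, ← step2]
  exact (Finset.sum_congr rfl step1).symm
end

section
/- Let p be a prime, D a nonempty subset of ℤ/pℤ, and k a positive integer with k ≤ p − 1. Define the Fourier bias Φ(D) = max over nontrivial additive characters χ of ℤ/pℤ of |Σ_{a ∈ D} χ(a)|. Then for every nontrivial additive character χ of ℤ/pℤ and every permutation τ ∈ S_k with l(τ) cycles (counting fixed points), |Σ_{x ∈ X_τ} ∏_{i=1}^{k} χ(x_i)| ≤ Φ(D)^{l(τ)}, where X_τ = {(x_1,…,x_k) ∈ D^k : x_i = x_j whenever i, j lie in the same cycle of τ}. -/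
open Finset

/-- The Fourier bias of a subset `D ⊆ ℤ/pℤ`:
`Φ(D) = max_{χ ≠ 1} |Σ_{a ∈ D} χ(a)|`, the maximum over nontrivial additive
characters of the absolute value of the character sum over `D`. -/
noncomputable def fourierBias {p : ℕ} (D : Finset (ZMod p)) : ℝ :=
  sSup {r : ℝ | ∃ χ : AddChar (ZMod p) ℂ, χ ≠ 1 ∧ r = ‖∑ a ∈ D, χ a‖}

open Equiv Equiv.Perm in
lemma sameCycle_fixed {k : ℕ} {τ : Equiv.Perm (Fin k)} {i j : Fin k}
    (hi : τ i = i) (h : τ.SameCycle i j) : i = j := by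
  obtain ⟨n, hn⟩ := h
  rw [← hn, zpow_apply_eq_self_of_apply_eq_self hi]

open Equiv Equiv.Perm in
lemma card_quotient_sameCycle {k : ℕ} (τ : Equiv.Perm (Fin k))
    [Fintype (Quotient (SameCycle.setoid τ))] :
    Fintype.card (Quotient (SameCycle.setoid τ)) = numCycles τ := by
  classical
  have hwd : ∀ i j : Fin k, τ.SameCycle i j →
      (if h : τ i = i then (Sum.inr ⟨i, h⟩ : ↥τ.cycleFactorsFinset ⊕ {i : Fin k // τ i = i})
        else Sum.inl ⟨τ.cycleOf i, cycleOf_mem_cycleFactorsFinset_iff.2 (mem_support.2 h)⟩)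
      = (if h : τ j = j then Sum.inr ⟨j, h⟩
        else Sum.inl ⟨τ.cycleOf j, cycleOf_mem_cycleFactorsFinset_iff.2 (mem_support.2 h)⟩) := by
    intro i j hij
    by_cases hi : τ i = i
    · obtain rfl := sameCycle_fixed hi hij
      rfl
    · have hj : τ j ≠ j := by
        intro hj'
        obtain rfl := sameCycle_fixed hj' hij.symm
        exact hi hj'
      rw [dif_neg hi, dif_neg hj]
      congr 1
      exact Subtype.ext hij.cycleOf_eq
  let F : Quotient (SameCycle.setoid τ) → (↥τ.cycleFactorsFinset ⊕ {i : Fin k // τ i = i}) :=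
    Quotient.lift _ hwd
  have hbij : Function.Bijective F := by
    constructor
    · rintro ⟨i⟩ ⟨j⟩ h
      refine Quotient.sound ?_
      change F ⟦i⟧ = F ⟦j⟧ at h
      show τ.SameCycle i j
      by_cases hi : τ i = i <;> by_cases hj : τ j = j
      · simp only [F, Quotient.lift_mk, dif_pos hi, dif_pos hj] at h
        obtain rfl : i = j := congrArg Subtype.val (Sum.inr.inj h)
        exact SameCycle.refl τ i
      · simp only [F, Quotient.lift_mk, dif_pos hi, dif_neg hj] at h
        exact absurd h (by simp)
      · simp only [F, Quotient.lift_mk, dif_neg hi, dif_pos hj] at h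
        exact absurd h (by simp)
      · simp only [F, Quotient.lift_mk, dif_neg hi, dif_neg hj] at h
        have hc : τ.cycleOf i = τ.cycleOf j := congrArg Subtype.val (Sum.inl.inj h)
        have hmem : j ∈ (τ.cycleOf i).support := by
          rw [hc]; exact mem_support_cycleOf_iff.2 ⟨SameCycle.refl τ j, mem_support.2 hj⟩
        exact (mem_support_cycleOf_iff.1 hmem).1
    · rintro (⟨c, hc⟩ | ⟨i, hi⟩)
      · have hc1 : c.IsCycle := (mem_cycleFactorsFinset_iff.1 hc).1
        obtain ⟨x, hx⟩ := hc1.nonempty_support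
        have hxfix : τ x ≠ x := mem_support.1 (mem_cycleFactorsFinset_support_le hc hx)
        refine ⟨⟦x⟧, ?_⟩
        show (if h : τ x = x then _ else _) = _
        rw [dif_neg hxfix]
        congr 1
        exact Subtype.ext (cycle_is_cycleOf hx hc).symm
      · exact ⟨⟦i⟧, by show (if h : τ i = i then _ else _) = _; rw [dif_pos hi]⟩
  rw [Fintype.card_of_bijective hbij, Fintype.card_sum, Fintype.card_coe]
  have h1 : τ.cycleFactorsFinset.card = τ.cycleType.card := by
    rw [Equiv.Perm.cycleType_def, Multiset.card_map]; rfl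
  have h2 : Fintype.card {i : Fin k // τ i = i} = k - τ.support.card := by
    rw [Fintype.card_subtype]
    have h := Finset.card_filter_add_card_filter_not
      (s := (Finset.univ : Finset (Fin k))) (p := fun i => τ i = i)
    simp only [Finset.card_univ, Fintype.card_fin] at h
    have hsupp : τ.support = Finset.univ.filter (fun i => ¬ τ i = i) := by
      ext i
      simp [Equiv.Perm.mem_support]
    have hs : τ.support.card = (Finset.univ.filter (fun i => ¬ τ i = i)).card := by
      rw [hsupp]
    omega
  unfold numCycles
  omega

/-- For every nontrivial additive character `χ` of `ℤ/pℤ` and every permutation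
`τ ∈ S_k` with `l(τ)` cycles (counting fixed points), the character sum of
`∏ i χ(x_i)` over the tuples of `D^k` of type `τ` is bounded by `Φ(D)^{l(τ)}`. -/
theorem char_sum_type_le_fourierBias_pow {p : ℕ} [hp : Fact p.Prime]
    (D : Finset (ZMod p)) (hD : D.Nonempty)
    {k : ℕ} (hk : 0 < k) (hkp : k ≤ p - 1)
    (χ : AddChar (ZMod p) ℂ) (hχ : χ ≠ 1) (τ : Equiv.Perm (Fin k)) :
    ‖∑ x ∈ Finset.univ.filter (fun x : Fin k → ZMod p =>
        (∀ i, x i ∈ D) ∧ ∀ i j, τ.SameCycle i j → x i = x j),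
      ∏ i, χ (x i)‖ ≤ fourierBias D ^ numCycles τ := by
  classical
  set Q := Quotient (Equiv.Perm.SameCycle.setoid τ) with hQ
  let n : Q → ℕ := fun q => (Finset.univ.filter (fun i : Fin k => (⟦i⟧ : Q) = q)).card
  -- rewrite the sum over constrained tuples as a sum over functions on the quotient
  have hsum : ∑ x ∈ Finset.univ.filter (fun x : Fin k → ZMod p =>
        (∀ i, x i ∈ D) ∧ ∀ i j, τ.SameCycle i j → x i = x j),
      ∏ i, χ (x i)
      = ∑ y ∈ Fintype.piFinset (fun _ : Q => D), ∏ i : Fin k, χ (y ⟦i⟧) := by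
    refine Finset.sum_nbij' (i := fun x (q : Q) => x q.out)
      (j := fun y (i : Fin k) => y ⟦i⟧) ?_ ?_ ?_ ?_ ?_
    · intro x hx
      simp only [Finset.mem_filter, Finset.mem_univ, true_and] at hx
      exact Fintype.mem_piFinset.2 fun q => hx.1 _
    · intro y hy
      simp only [Fintype.mem_piFinset] at hy
      refine Finset.mem_filter.2 ⟨Finset.mem_univ _, fun i => hy _, fun i j hij => ?_⟩
      have : (⟦i⟧ : Q) = ⟦j⟧ := Quotient.sound hij
      show y ⟦i⟧ = y ⟦j⟧
      rw [this]
    · intro x hx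
      simp only [Finset.mem_filter, Finset.mem_univ, true_and] at hx
      funext i
      have hsc : τ.SameCycle (⟦i⟧ : Q).out i := @Quotient.mk_out _ (Equiv.Perm.SameCycle.setoid τ) i
      exact hx.2 _ _ hsc
    · intro y hy
      funext q
      exact congrArg y (Quotient.out_eq q)
    · intro x hx
      simp only [Finset.mem_filter, Finset.mem_univ, true_and] at hx
      refine Finset.prod_congr rfl fun i _ => congrArg χ ?_
      have hsc : τ.SameCycle (⟦i⟧ : Q).out i := @Quotient.mk_out _ (Equiv.Perm.SameCycle.setoid τ) i
      exact (hx.2 _ _ hsc).symm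
  -- turn the inner product into a product over cycles
  have hprod : ∀ y : Q → ZMod p, ∏ i : Fin k, χ (y ⟦i⟧) = ∏ q : Q, χ (y q) ^ n q := by
    intro y
    rw [← Finset.prod_fiberwise (s := Finset.univ) (g := fun i : Fin k => (⟦i⟧ : Q))
      (f := fun i => χ (y ⟦i⟧))]
    refine Finset.prod_congr rfl fun q _ => ?_
    rw [← Finset.prod_const]
    refine Finset.prod_congr rfl fun i hi => ?_
    rw [(Finset.mem_filter.1 hi).2]
  rw [hsum]
  simp_rw [hprod]
  rw [← Finset.prod_univ_sum (fun _ : Q => D) (fun q a => χ a ^ n q), norm_prod]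
  -- bound each factor by the Fourier bias
  have hΦbdd : BddAbove {r : ℝ | ∃ ψ : AddChar (ZMod p) ℂ, ψ ≠ 1 ∧ r = ‖∑ a ∈ D, ψ a‖} := by
    refine ⟨D.card, ?_⟩
    rintro r ⟨ψ, -, rfl⟩
    calc ‖∑ a ∈ D, ψ a‖ ≤ ∑ a ∈ D, ‖ψ a‖ := norm_sum_le _ _
      _ = D.card := by simp
  have hfac : ∀ q : Q, ‖∑ a ∈ D, χ a ^ n q‖ ≤ fourierBias D := by
    intro q
    have hn1 : 1 ≤ n q := by
      refine Finset.card_pos.2 ⟨q.out, ?_⟩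
      simp [n, Quotient.out_eq]
    have hnk : n q ≤ k := le_trans (Finset.card_filter_le _ _) (by simp)
    have hm : ((n q : ZMod p)) ≠ 0 := by
      rw [Ne, ZMod.natCast_eq_zero_iff]
      intro hdvd
      have := Nat.le_of_dvd (by omega) hdvd
      have hp2 := hp.out.two_le
      omega
    have hne : AddChar.mulShift χ ((n q : ZMod p)) ≠ 1 :=
      (AddChar.IsPrimitive.of_ne_one hχ) hm
    have hmem : ‖∑ a ∈ D, χ a ^ n q‖ ∈
        {r : ℝ | ∃ ψ : AddChar (ZMod p) ℂ, ψ ≠ 1 ∧ r = ‖∑ a ∈ D, ψ a‖} := by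
      refine ⟨AddChar.mulShift χ ((n q : ZMod p)), hne, ?_⟩
      congr 1
      exact Finset.sum_congr rfl fun a _ => (AddChar.mulShift_spec' χ (n q) a).symm
    exact le_csSup hΦbdd hmem
  calc ∏ q : Q, ‖∑ a ∈ D, χ a ^ n q‖ ≤ ∏ _q : Q, fourierBias D :=
        Finset.prod_le_prod (fun q _ => norm_nonneg _) (fun q _ => hfac q)
    _ = fourierBias D ^ numCycles τ := by
        rw [Finset.prod_const, Finset.card_univ, card_quotient_sameCycle]
end

section
/- Let p be a prime, D ⊆ ℤ/pℤ a nonempty subset of cardinality n, b ∈ ℤ/pℤ, and k a positive integer with k ≤ p − 1. Let N be the number of k-tuples (x_1,…,x_k) ∈ D^k with pairwise distinct coordinates such that x_1 + x_2 + ⋯ + x_k = b. Let Φ(D) = max over nontrivial additive characters χ of ℤ/pℤ of |Σ_{a ∈ D} χ(a)|. Then N/k! ≥ (1/p)·C(n,k) − C(Φ(D)+k−1, k); equivalently, N ≥ n(n−1)⋯(n−k+1)/p − ∏_{j=0}^{k−1}(Φ(D)+j). -/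
/-! Count with additive characters: `p · N = ∑_χ χ(-b) ∑_x ∏_i χ(x_i)`, the sum over injective
tuples `x` from `D`. The trivial character contributes `n(n-1)⋯(n-k+1)`. For `χ ≠ 1` the inner sum is
`k!` times the elementary symmetric function `e_k` of the values `χ(a)`, `a ∈ D`, whose power sums
`∑_a χ(a)^m = ∑_a χ(m a)` (`0 < m < p`) are again nontrivial character sums, bounded by `Φ(D)`.
Newton's identities then give `|e_k| ≤ C(Φ(D) + k - 1, k)`. -/

open Finset

section InjTuples

variable {α : Type*} [Fintype α] [DecidableEq α]

def injTuples (S : Finset α) (k : ℕ) : Finset (Fin k → α) :=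
  {x | (∀ i, x i ∈ S) ∧ Function.Injective x}

variable {S : Finset α} {k : ℕ}

lemma mem_injTuples {x : Fin k → α} :
    x ∈ injTuples S k ↔ (∀ i, x i ∈ S) ∧ Function.Injective x := by
  simp [injTuples]

def injTuplesEquivEmbedding (S : Finset α) (k : ℕ) : injTuples S k ≃ (Fin k ↪ S) where
  toFun x := ⟨fun i => ⟨x.1 i, (mem_injTuples.1 x.2).1 i⟩,
    fun _ _ h => (mem_injTuples.1 x.2).2 (congrArg Subtype.val h)⟩
  invFun e := ⟨fun i => e i, mem_injTuples.2 ⟨fun i => (e i).2,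
    fun _ _ h => e.injective (Subtype.ext h)⟩⟩
  left_inv _ := rfl
  right_inv _ := rfl

lemma card_injTuples (S : Finset α) (k : ℕ) : #(injTuples S k) = (#S).descFactorial k := by
  rw [← Fintype.card_coe, Fintype.card_congr (injTuplesEquivEmbedding S k),
    Fintype.card_embedding_eq, Fintype.card_coe, Fintype.card_fin]

lemma card_image_of_mem_injTuples {x : Fin k → α} (hx : x ∈ injTuples S k) :
    #(univ.image x) = k := by
  rw [card_image_of_injective _ (mem_injTuples.1 hx).2, card_univ, Fintype.card_fin]

lemma image_mem_powersetCard_of_mem_injTuples {x : Fin k → α} (hx : x ∈ injTuples S k) :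
    univ.image x ∈ S.powersetCard k :=
  mem_powersetCard.2 ⟨image_subset_iff.2 fun i _ => (mem_injTuples.1 hx).1 i,
    card_image_of_mem_injTuples hx⟩

lemma filter_image_eq_injTuples {A : Finset α} (hA : A ∈ S.powersetCard k) :
    {x ∈ injTuples S k | univ.image x = A} = injTuples A k := by
  obtain ⟨hAS, hAk⟩ := mem_powersetCard.1 hA
  ext x
  simp only [mem_filter, mem_injTuples]
  constructor
  · rintro ⟨⟨-, hinj⟩, rfl⟩
    exact ⟨fun i => mem_image_of_mem x (mem_univ i), hinj⟩
  · rintro ⟨hxA, hinj⟩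
    have hx : x ∈ injTuples A k := mem_injTuples.2 ⟨hxA, hinj⟩
    refine ⟨⟨fun i => hAS (hxA i), hinj⟩, eq_of_subset_of_card_le ?_ ?_⟩
    · exact image_subset_iff.2 fun i _ => hxA i
    · rw [card_image_of_mem_injTuples hx, hAk]

/-- Grouping injective tuples by their set of entries: each `k`-subset arises from `k!` tuples. -/
lemma sum_injTuples_prod {R : Type*} [CommSemiring R] (S : Finset α) (k : ℕ) (f : α → R) :
    ∑ x ∈ injTuples S k, ∏ i, f (x i) = k.factorial * ∑ A ∈ S.powersetCard k, ∏ a ∈ A, f a := by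
  rw [← sum_fiberwise_of_maps_to (g := fun x => univ.image x)
    (fun _ => image_mem_powersetCard_of_mem_injTuples), mul_sum]
  refine sum_congr rfl fun A hA => ?_
  have hprod : ∀ x ∈ {x ∈ injTuples S k | univ.image x = A}, ∏ i, f (x i) = ∏ a ∈ A, f a := by
    intro x hx
    obtain ⟨hxS, rfl⟩ := mem_filter.1 hx
    rw [prod_image fun i _ j _ h => (mem_injTuples.1 hxS).2 h]
  rw [sum_congr rfl hprod, sum_const, filter_image_eq_injTuples hA, card_injTuples,
    (mem_powersetCard.1 hA).2, Nat.descFactorial_self, nsmul_eq_mul]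

end InjTuples

section Newton

variable {α : Type*} {R : Type*} [CommRing R]

lemma aeval_esymm_eq_sum_powersetCard_prod (S : Finset α) (f : α → R) (j : ℕ) :
    MvPolynomial.aeval (fun a : S => f a) (MvPolynomial.esymm S R j)
      = ∑ A ∈ S.powersetCard j, ∏ a ∈ A, f a := by
  rw [MvPolynomial.aeval_esymm_eq_multiset_esymm, univ_eq_attach, attach_val, ← esymm_map_val]
  exact congrArg (Multiset.esymm · j) (Multiset.attach_map_val' _ f)

lemma aeval_psum_eq_sum_pow (S : Finset α) (f : α → R) (m : ℕ) :
    MvPolynomial.aeval (fun a : S => f a) (MvPolynomial.psum S R m) = ∑ a ∈ S, f a ^ m := by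
  simp only [MvPolynomial.psum, map_sum, map_pow, MvPolynomial.aeval_X, univ_eq_attach,
    sum_attach S (fun a => f a ^ m)]

/-- Newton's identities for the values of `f` on `S`. -/
lemma mul_sum_powersetCard_prod_eq_sum (S : Finset α) (f : α → R) (k : ℕ) :
    k * ∑ A ∈ S.powersetCard k, ∏ a ∈ A, f a
      = (-1) ^ (k + 1) * ∑ i ∈ range k,
          (-1) ^ i * (∑ A ∈ S.powersetCard i, ∏ a ∈ A, f a) * ∑ a ∈ S, f a ^ (k - i) := by
  have h := congrArg (MvPolynomial.aeval fun a : S => f a) (MvPolynomial.mul_esymm_eq_sum S R k)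
  simp only [map_mul, map_natCast, map_sum, map_pow, map_neg, map_one,
    aeval_esymm_eq_sum_powersetCard_prod, aeval_psum_eq_sum_pow] at h
  rw [h, sum_filter, Nat.sum_antidiagonal_eq_sum_range_succ_mk, sum_range_succ,
    if_neg (lt_irrefl k), add_zero]
  exact congrArg _ (sum_congr rfl fun i hi => if_pos (mem_range.1 hi))

end Newton

/-- The binomial coefficient `C(Φ + j - 1, j)`. -/
noncomputable def realMultichoose (Φ : ℝ) (j : ℕ) : ℝ :=
  (∏ t ∈ range j, (Φ + t)) / j.factorial

lemma realMultichoose_nonneg {Φ : ℝ} (hΦ : 0 ≤ Φ) (j : ℕ) : 0 ≤ realMultichoose Φ j :=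
  div_nonneg (prod_nonneg fun _ _ => by positivity) (by positivity)

lemma factorial_mul_realMultichoose (Φ : ℝ) (j : ℕ) :
    j.factorial * realMultichoose Φ j = ∏ t ∈ range j, (Φ + t) :=
  mul_div_cancel₀ _ (by positivity)

lemma mul_sum_realMultichoose (Φ : ℝ) (j : ℕ) :
    Φ * ∑ i ∈ range j, realMultichoose Φ i = j * realMultichoose Φ j := by
  induction j with
  | zero => simp
  | succ j ih =>
    rw [sum_range_succ, mul_add, ih]
    simp only [realMultichoose, prod_range_succ, Nat.factorial_succ]
    push_cast
    field_simp
    ring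

/-- Induction on `j` through Newton's identities; `mul_sum_realMultichoose` is exactly the
recursion the bound has to satisfy. -/
lemma norm_sum_powersetCard_prod_le {α 𝕜 : Type*} [RCLike 𝕜] (S : Finset α) (f : α → 𝕜)
    {Φ : ℝ} {K : ℕ} (hP : ∀ m, 1 ≤ m → m ≤ K → ‖∑ a ∈ S, f a ^ m‖ ≤ Φ) :
    ∀ j ≤ K, ‖∑ A ∈ S.powersetCard j, ∏ a ∈ A, f a‖ ≤ realMultichoose Φ j := by
  intro j
  induction j using Nat.strong_induction_on with
  | _ j ih =>
    intro hjK
    rcases j.eq_zero_or_pos with rfl | hj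
    · simp [realMultichoose]
    have hΦ : 0 ≤ Φ := (norm_nonneg _).trans (hP 1 le_rfl (by omega))
    have hbound : (j : ℝ) * ‖∑ A ∈ S.powersetCard j, ∏ a ∈ A, f a‖ ≤ j * realMultichoose Φ j :=
      calc (j : ℝ) * ‖∑ A ∈ S.powersetCard j, ∏ a ∈ A, f a‖
          = ‖∑ i ∈ range j, (-1) ^ i * (∑ A ∈ S.powersetCard i, ∏ a ∈ A, f a)
              * ∑ a ∈ S, f a ^ (j - i)‖ := by
            rw [← RCLike.norm_natCast (K := 𝕜), ← norm_mul, mul_sum_powersetCard_prod_eq_sum,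
              norm_mul, norm_pow, norm_neg, norm_one, one_pow, one_mul]
        _ ≤ ∑ i ∈ range j, realMultichoose Φ i * Φ := by
            refine (norm_sum_le _ _).trans (sum_le_sum fun i hi => ?_)
            have hij := mem_range.1 hi
            rw [norm_mul, norm_mul, norm_pow, norm_neg, norm_one, one_pow, one_mul]
            exact mul_le_mul (ih i hij (by omega)) (hP _ (by omega) (by omega)) (norm_nonneg _)
              (realMultichoose_nonneg hΦ i)
        _ = j * realMultichoose Φ j := by rw [← sum_mul, mul_comm, mul_sum_realMultichoose]
    exact le_of_mul_le_mul_left hbound (by exact_mod_cast hj)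

lemma AddChar.map_sum_eq_prod {A M ι : Type*} [AddCommMonoid A] [CommMonoid M]
    (ψ : AddChar A M) (s : Finset ι) (f : ι → A) : ψ (∑ i ∈ s, f i) = ∏ i ∈ s, ψ (f i) := by
  induction s using Finset.cons_induction with
  | empty => simp
  | cons a s _ ih => rw [sum_cons, prod_cons, AddChar.map_add_eq_mul, ih]

section Orthogonality

variable {G β : Type*} [AddCommGroup G] [Fintype G] [DecidableEq G]

lemma card_mul_card_filter_eq_sum_addChar (T : Finset β) (s : β → G) (b : G) :
    (Fintype.card G : ℂ) * #{x ∈ T | s x = b} = ∑ ψ : AddChar G ℂ, ψ (-b) * ∑ x ∈ T, ψ (s x) :=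
  calc (Fintype.card G : ℂ) * #{x ∈ T | s x = b}
      = ∑ x ∈ T, if s x - b = 0 then (Fintype.card G : ℂ) else 0 := by
        simp_rw [sub_eq_zero, sum_ite, sum_const_zero, add_zero, sum_const, nsmul_eq_mul, mul_comm]
    _ = ∑ x ∈ T, ∑ ψ : AddChar G ℂ, ψ (-b) * ψ (s x) := by
        simp_rw [← AddChar.sum_apply_eq_ite, ← AddChar.map_add_eq_mul, neg_add_eq_sub]
    _ = ∑ ψ : AddChar G ℂ, ψ (-b) * ∑ x ∈ T, ψ (s x) := by
        rw [sum_comm]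
        simp_rw [mul_sum]

lemma card_div_sub_le_card_filter_of_norm_sum_addChar_le (T : Finset β) (s : β → G) (b : G)
    {B : ℝ} (hB : 0 ≤ B) (h : ∀ ψ : AddChar G ℂ, ψ ≠ 1 → ‖∑ x ∈ T, ψ (s x)‖ ≤ B) :
    (#T : ℝ) / Fintype.card G - B ≤ #{x ∈ T | s x = b} := by
  set E := ∑ ψ ∈ univ.erase (1 : AddChar G ℂ), ψ (-b) * ∑ x ∈ T, ψ (s x)
  have hsplit : (Fintype.card G : ℂ) * #{x ∈ T | s x = b} = #T + E := by
    rw [card_mul_card_filter_eq_sum_addChar, ← add_sum_erase univ _ (mem_univ 1)]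
    simp [E]
  have hE : ‖E‖ ≤ Fintype.card G * B :=
    calc ‖E‖ ≤ ∑ ψ ∈ univ.erase (1 : AddChar G ℂ), B := by
          refine (norm_sum_le _ _).trans (sum_le_sum fun ψ hψ => ?_)
          rw [norm_mul, AddChar.norm_apply, one_mul]
          exact h ψ (ne_of_mem_erase hψ)
      _ ≤ Fintype.card G * B := by
          rw [sum_const, nsmul_eq_mul, ← AddChar.card_eq, ← card_univ]
          exact mul_le_mul_of_nonneg_right (by exact_mod_cast card_erase_le) hB
  have hre : (Fintype.card G : ℝ) * #{x ∈ T | s x = b} = #T + E.re := by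
    simpa using congrArg Complex.re hsplit
  have hG : (0 : ℝ) < Fintype.card G := by exact_mod_cast Fintype.card_pos
  rw [sub_le_iff_le_add, div_le_iff₀ hG]
  nlinarith [(abs_le.1 ((Complex.abs_re_le_norm E).trans hE)).1]

end Orthogonality

section FourierBias

variable {p : ℕ}

lemma bddAbove_norm_sum_addChar [NeZero p] (D : Finset (ZMod p)) :
    BddAbove {r : ℝ | ∃ χ : AddChar (ZMod p) ℂ, χ ≠ 1 ∧ r = ‖∑ a ∈ D, χ a‖} := by
  refine ⟨#D, ?_⟩
  rintro r ⟨χ, -, rfl⟩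
  exact (norm_sum_le _ _).trans (by simp)

lemma norm_sum_addChar_le_fourierBias [NeZero p] (D : Finset (ZMod p)) {χ : AddChar (ZMod p) ℂ}
    (hχ : χ ≠ 1) : ‖∑ a ∈ D, χ a‖ ≤ fourierBias D :=
  le_csSup (bddAbove_norm_sum_addChar D) ⟨χ, hχ, rfl⟩

lemma fourierBias_nonneg [Fact p.Prime] (D : Finset (ZMod p)) : 0 ≤ fourierBias D := by
  have hcard : 1 < Fintype.card (AddChar (ZMod p) ℂ) := by
    rw [AddChar.card_eq, ZMod.card]
    exact (Fact.out : p.Prime).one_lt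
  obtain ⟨χ, hχ⟩ := Fintype.exists_ne_of_one_lt_card hcard 1
  exact (norm_nonneg _).trans (norm_sum_addChar_le_fourierBias D hχ)

/-- For `0 < m < p`, `χ ^ m` is again a nontrivial character. -/
lemma norm_sum_addChar_pow_le_fourierBias [Fact p.Prime] (D : Finset (ZMod p))
    {χ : AddChar (ZMod p) ℂ} (hχ : χ ≠ 1) {m : ℕ} (hm : 1 ≤ m) (hmp : m ≤ p - 1) :
    ‖∑ a ∈ D, χ a ^ m‖ ≤ fourierBias D := by
  have hm0 : (m : ZMod p) ≠ 0 := by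
    rw [Ne, ZMod.natCast_eq_zero_iff]
    exact Nat.not_dvd_of_pos_of_lt hm (by have := (Fact.out : p.Prime).two_le; omega)
  have hpow : ∀ a, χ a ^ m = χ.mulShift m a := fun a => by
    rw [AddChar.mulShift_apply, ← nsmul_eq_mul, AddChar.map_nsmul_eq_pow]
  simp_rw [hpow]
  exact norm_sum_addChar_le_fourierBias D (AddChar.IsPrimitive.of_ne_one hχ hm0)

end FourierBias

theorem card_distinct_tuples_sum_eq_ge_general {p : ℕ} [hp : Fact p.Prime]
    (D : Finset (ZMod p)) (b : ZMod p)
    {k : ℕ} (hkp : k ≤ p - 1) :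
    ((Finset.univ.filter (fun x : Fin k → ZMod p =>
        (∀ i, x i ∈ D) ∧ Function.Injective x ∧ ∑ i, x i = b)).card : ℝ) ≥
      (Nat.descFactorial D.card k : ℝ) / p -
        ∏ j ∈ Finset.range k, (fourierBias D + (j : ℝ)) := by
  have hfilter : univ.filter (fun x : Fin k → ZMod p =>
      (∀ i, x i ∈ D) ∧ Function.Injective x ∧ ∑ i, x i = b) =
      {x ∈ injTuples D k | ∑ i, x i = b} := by
    simp only [injTuples, filter_filter, and_assoc]
  have hbound (χ : AddChar (ZMod p) ℂ) (hχ : χ ≠ 1) :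
      ‖∑ x ∈ injTuples D k, χ (∑ i, x i)‖ ≤ ∏ j ∈ range k, (fourierBias D + j) := by
    simp_rw [AddChar.map_sum_eq_prod, sum_injTuples_prod, norm_mul, RCLike.norm_natCast,
      ← factorial_mul_realMultichoose]
    exact mul_le_mul_of_nonneg_left (norm_sum_powersetCard_prod_le D χ
      (fun m hm hmp => norm_sum_addChar_pow_le_fourierBias D hχ hm hmp) k hkp) (by positivity)
  have := card_div_sub_le_card_filter_of_norm_sum_addChar_le (injTuples D k) (fun x => ∑ i, x i) b
    (prod_nonneg fun j _ => add_nonneg (fourierBias_nonneg D) j.cast_nonneg) hbound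
  rwa [card_injTuples, ZMod.card, ← hfilter] at this

/-- Let `N` be the number of `k`-tuples of pairwise distinct elements of `D`
summing to `b`.  Then `N ≥ n(n-1)⋯(n-k+1)/p - ∏_{j=0}^{k-1} (Φ(D)+j)`, where
`n = |D|`; equivalently `N/k! ≥ (1/p)·C(n,k) - C(Φ(D)+k-1, k)`. -/
theorem card_distinct_tuples_sum_eq_ge {p : ℕ} [hp : Fact p.Prime]
    (D : Finset (ZMod p)) (hD : D.Nonempty) (b : ZMod p)
    {k : ℕ} (hk : 0 < k) (hkp : k ≤ p - 1) :
    ((Finset.univ.filter (fun x : Fin k → ZMod p =>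
        (∀ i, x i ∈ D) ∧ Function.Injective x ∧ ∑ i, x i = b)).card : ℝ) ≥
      (Nat.descFactorial D.card k : ℝ) / p -
        ∏ j ∈ Finset.range k, (fourierBias D + (j : ℝ)) :=
  card_distinct_tuples_sum_eq_ge_general (hp := hp) D b hkp
end

section
/- For every ε > 0 there exist δ > 0 and P such that the following holds: for every prime p ≥ P, every subset D ⊆ ℤ/pℤ with p − |D| ≤ δ·p, and every b ∈ ℤ/pℤ, the number N(b,D) of subsets S ⊆ D whose elements sum to b satisfies |p · N(b,D) / 2^{|D|} − 1| ≤ ε. In other words, if n = |D| = p − o(p), then N(b,D) = (2^n / p)(1 + o(1)). -/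
/-!
Let `ψ` be a primitive additive character of `ℤ/pℤ` and `N` the number of subsets of `D` summing
to `b`. Orthogonality of characters gives `p N = ∑ₜ ψ(-tb) ∏_{a ∈ D} (1 + ψ(ta))`, whose `t = 0`
term is `2^|D|`. For `t ≠ 0` every factor has modulus at most `2`, and at most `1` unless `ta`
lies in the set `L` of points outside the middle third of `ℤ/pℤ`, of size at most `(2p + 2)/3`. Hence
`|p N - 2^|D|| ≤ p 2^|L|`, which is `o(2^|D|)` as soon as `|D| ≥ 11p/12`.
-/

open Finset

namespace AddChar

lemma map_sum_eq_prod_s8 {A M ι : Type*} [AddCommMonoid A] [CommMonoid M] (ψ : AddChar A M)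
    (s : Finset ι) (f : ι → A) : ψ (∑ i ∈ s, f i) = ∏ i ∈ s, ψ (f i) := by
  classical
  induction s using Finset.induction_on with
  | empty => simp
  | insert i s hi ih => rw [sum_insert hi, prod_insert hi, map_add_eq_mul, ih]

theorem IsPrimitive.card_mul_card_filter_sum_eq {R R' : Type*} [CommRing R] [Fintype R]
    [DecidableEq R] [CommRing R'] [IsDomain R'] {ψ : AddChar R R'} (hψ : ψ.IsPrimitive)
    (D : Finset R) (b : R) :
    (Fintype.card R : R') * #{S ∈ D.powerset | S.sum id = b}
      = ∑ t, ψ (-(t * b)) * ∏ a ∈ D, (1 + ψ (t * a)) := by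
  calc (Fintype.card R : R') * #{S ∈ D.powerset | S.sum id = b}
      = ∑ S ∈ D.powerset, ∑ t, ψ (t * (S.sum id - b)) := by
        simp [sum_mulShift _ hψ, sub_eq_zero, sum_ite, mul_comm]
    _ = ∑ t, ψ (-(t * b)) * ∏ a ∈ D, (1 + ψ (t * a)) := by
        rw [sum_comm]
        refine sum_congr rfl fun t _ => ?_
        rw [prod_one_add, mul_sum]
        refine sum_congr rfl fun S _ => ?_
        rw [← map_sum_eq_prod_s8, ← map_add_eq_mul, ← mul_sum]
        congr 1
        simp only [id]
        ring

end AddChar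

lemma prod_le_two_pow_card_filter_one_lt {ι : Type*} (s : Finset ι) {f : ι → ℝ}
    (h0 : ∀ i ∈ s, 0 ≤ f i) (h2 : ∀ i ∈ s, f i ≤ 2) :
    ∏ i ∈ s, f i ≤ 2 ^ #{i ∈ s | 1 < f i} := by
  calc ∏ i ∈ s, f i ≤ ∏ i ∈ s, if 1 < f i then 2 else 1 :=
        prod_le_prod h0 fun i hi => by split_ifs with h <;> [exact h2 i hi; exact not_lt.1 h]
    _ = 2 ^ #{i ∈ s | 1 < f i} := by rw [prod_ite, prod_const_one, mul_one, prod_const]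

namespace AddChar

variable {F : Type*} [Field F] [Fintype F]

lemma norm_prod_one_add_mulShift_le (ψ : AddChar F ℂ) {t : F} (ht : t ≠ 0) (D : Finset F) :
    ‖∏ a ∈ D, (1 + ψ (t * a))‖ ≤ 2 ^ #{x | 1 < ‖1 + ψ x‖} := by
  have norm_le_two (x : F) : ‖1 + ψ x‖ ≤ 2 := by
    simpa [one_add_one_eq_two] using norm_add_le (1 : ℂ) (ψ x)
  rw [norm_prod]
  refine (prod_le_two_pow_card_filter_one_lt D (fun _ _ => norm_nonneg _)
    fun a _ => norm_le_two _).trans (pow_le_pow_right₀ one_le_two ?_)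
  refine card_le_card_of_injOn (t * ·) (fun a ha => ?_) fun a _ b _ hab => mul_left_cancel₀ ht hab
  simpa using (mem_filter.1 ha).2

theorem IsPrimitive.abs_card_mul_card_filter_sum_sub_le [DecidableEq F] {ψ : AddChar F ℂ}
    (hψ : ψ.IsPrimitive) (D : Finset F) (b : F) :
    |(Fintype.card F : ℝ) * #{S ∈ D.powerset | S.sum id = b} - 2 ^ #D|
      ≤ Fintype.card F * 2 ^ #{x | 1 < ‖1 + ψ x‖} := by
  have main_term : ψ (-(0 * b)) * ∏ a ∈ D, (1 + ψ (0 * a)) = 2 ^ #D := by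
    simp [one_add_one_eq_two]
  have error_terms := hψ.card_mul_card_filter_sum_eq D b
  rw [← add_sum_erase _ _ (mem_univ 0), main_term, ← sub_eq_iff_eq_add'] at error_terms
  rw [← Real.norm_eq_abs, ← Complex.norm_real]
  push_cast
  rw [error_terms]
  refine (norm_sum_le _ _).trans ?_
  refine (sum_le_card_nsmul _ _ (2 ^ #{x | 1 < ‖1 + ψ x‖}) fun t ht => ?_).trans ?_
  · rw [norm_mul, norm_apply, one_mul]
    exact norm_prod_one_add_mulShift_le ψ (ne_of_mem_erase ht) D
  · rw [nsmul_eq_mul]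
    gcongr
    exact_mod_cast card_erase_le

end AddChar

lemma Complex.norm_one_add_exp_mul_I_le_one {θ : ℝ} (h₁ : 2 * Real.pi / 3 ≤ θ)
    (h₂ : θ ≤ 4 * Real.pi / 3) : ‖1 + exp (θ * I)‖ ≤ 1 := by
  have hcos : Real.cos θ ≤ -1 / 2 := by
    have : 1 / 2 ≤ Real.cos (θ - Real.pi) := by
      rw [← Real.cos_abs, ← Real.cos_pi_div_three]
      exact Real.cos_le_cos_of_nonneg_of_le_pi (abs_nonneg _) (by linarith [Real.pi_pos])
        (abs_le.2 ⟨by linarith, by linarith⟩)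
    linarith [Real.cos_sub_pi θ]
  have hsq : ‖1 + exp (θ * I)‖ ^ 2 = 2 + 2 * Real.cos θ := by
    rw [Complex.sq_norm, normSq_apply]
    simp only [add_re, add_im, one_re, one_im, exp_ofReal_mul_I_re, exp_ofReal_mul_I_im]
    nlinarith [Real.sin_sq_add_cos_sq θ]
  nlinarith [norm_nonneg (1 + exp (θ * I))]

namespace ZMod

variable {N : ℕ} [NeZero N]

lemma three_mul_val_lt_or_gt_of_one_lt_norm_one_add_stdAddChar {x : ZMod N}
    (hx : 1 < ‖1 + stdAddChar x‖) : 3 * x.val < N ∨ 2 * N < 3 * x.val := by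
  by_contra! h
  have hN : (0 : ℝ) < N := by exact_mod_cast NeZero.pos N
  have h₁ : 1 / 3 ≤ (x.val : ℝ) / N := by
    have : (N : ℝ) ≤ 3 * x.val := by exact_mod_cast h.1
    rw [le_div_iff₀ hN]
    linarith
  have h₂ : (x.val : ℝ) / N ≤ 2 / 3 := by
    have : 3 * (x.val : ℝ) ≤ 2 * N := by exact_mod_cast h.2
    rw [div_le_iff₀ hN]
    linarith
  refine hx.not_ge ?_
  rw [stdAddChar_apply, toCircle_eq_circleExp, Circle.coe_exp]
  exact Complex.norm_one_add_exp_mul_I_le_one (by nlinarith [Real.pi_pos])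
    (by nlinarith [Real.pi_pos])

variable (N) in
lemma card_one_lt_norm_one_add_stdAddChar_le :
    3 * #{x : ZMod N | 1 < ‖1 + stdAddChar x‖} ≤ 2 * N + 2 := by
  have hcard : #{x : ZMod N | 1 < ‖1 + stdAddChar x‖}
      ≤ #(range ((N + 2) / 3) ∪ Ioo (2 * N / 3) N) := by
    refine card_le_card_of_injOn val (fun x hx => ?_) (val_injective N).injOn
    have := val_lt x
    have := three_mul_val_lt_or_gt_of_one_lt_norm_one_add_stdAddChar (mem_filter.1 hx).2
    simp only [coe_union, coe_range, coe_Ioo, Set.mem_union, Set.mem_Iio, Set.mem_Ioo]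
    omega
  have := card_union_le (range ((N + 2) / 3)) (Ioo (2 * N / 3) N)
  rw [card_range, Nat.card_Ioo] at this
  omega

end ZMod

lemma eventually_mul_two_pow_le {ε : ℝ} (hε : 0 < ε) :
    ∀ᶠ p : ℕ in Filter.atTop, ∀ k n : ℕ, 3 * k ≤ 2 * p + 2 → (p : ℝ) - n ≤ p / 12 →
      (p : ℝ) * 2 ^ k ≤ ε * 2 ^ n := by
  set r : ℝ := 2 ^ (1 / 4 : ℝ)
  have hr : 1 < r := Real.one_lt_rpow one_lt_two (by norm_num)
  filter_upwards [(tendsto_pow_const_div_const_pow_of_one_lt 1 hr).eventually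
    (gt_mem_nhds (half_pos hε))] with p hp k n hk hn
  -- `r ^ p * 2 ^ k = 2 ^ (p / 4 + k)` and `p / 4 + k ≤ 11 p / 12 + 2 / 3 ≤ n + 1`
  have hrp : r ^ p * 2 ^ k ≤ 2 * 2 ^ n := by
    have hk' : 3 * (k : ℝ) ≤ 2 * p + 2 := by exact_mod_cast hk
    rw [← Real.rpow_mul_natCast zero_le_two, ← Real.rpow_natCast, ← Real.rpow_natCast,
      ← Real.rpow_add two_pos, ← Real.rpow_one_add' zero_le_two (by positivity)]
    exact Real.rpow_le_rpow_of_exponent_le one_le_two (by linarith)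
  rw [pow_one, div_lt_iff₀ (by positivity)] at hp
  calc (p : ℝ) * 2 ^ k ≤ ε / 2 * r ^ p * 2 ^ k := by gcongr
    _ = ε / 2 * (r ^ p * 2 ^ k) := by ring
    _ ≤ ε / 2 * (2 * 2 ^ n) := by gcongr
    _ = ε * 2 ^ n := by ring

/-- If `D ⊆ ℤ/pℤ` with `|D| = n = p - o(p)`, then for every `b ∈ ℤ/pℤ` the number
`N(b, D)` of subsets of `D` summing to `b` satisfies `N(b, D) = (2^n/p)(1 + o(1))`:
for every `ε > 0` there are `δ > 0` and `P` such that for every prime `p ≥ P`,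
every `D ⊆ ℤ/pℤ` with `p - |D| ≤ δ p` and every `b ∈ ℤ/pℤ`,
`|p · N(b, D)/2^|D| - 1| ≤ ε`. -/
theorem card_subsets_sum_eq_asymptotic :
    ∀ ε > (0 : ℝ), ∃ δ > (0 : ℝ), ∃ P : ℕ, ∀ p : ℕ, p.Prime → P ≤ p →
      ∀ D : Finset (ZMod p), (p : ℝ) - D.card ≤ δ * p →
        ∀ b : ZMod p,
          |(p : ℝ) * ((D.powerset.filter (fun S => S.sum id = b)).card : ℝ) /
              2 ^ D.card - 1| ≤ ε := by
  intro ε hε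
  obtain ⟨P, hP⟩ := Filter.eventually_atTop.1 (eventually_mul_two_pow_le hε)
  refine ⟨1 / 12, by norm_num, P, fun p hp hpP D hD b => ?_⟩
  have : Fact p.Prime := ⟨hp⟩
  have hdev := (ZMod.isPrimitive_stdAddChar p).abs_card_mul_card_filter_sum_sub_le D b
  rw [ZMod.card] at hdev
  rw [div_sub_one (pow_ne_zero _ two_ne_zero), abs_div,
    abs_of_pos (by positivity : (0 : ℝ) < 2 ^ #D), div_le_iff₀ (by positivity)]
  exact hdev.trans (hP p hpP _ #D (ZMod.card_one_lt_norm_one_add_stdAddChar_le p) (by linarith))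
end

section
/- Let f_n : {0,1}^n → {0,1} be the laced Boolean function: p is the least prime with p ≥ n; for X = (x_1,…,x_n), s(X) is the unique integer with 1 ≤ s(X) ≤ p and s(X) ≡ Σ_{k=1}^{n} k·x_k (mod p), and f_n(X) = x_{s(X)} if s(X) ≤ n, else f_n(X) = x_1. Then the weight wt(f_n) = |{X ∈ {0,1}^n : f_n(X) = 1}| satisfies wt(f_n) = 2^{n−1}(1 + o(1)) as n → ∞; that is, wt(f_n)/2^{n−1} → 1 as n → ∞. In particular, f_n is asymptotically balanced. -/
open Finset

/-- The least prime `p` with `p ≥ n`. -/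
def leastPrime (n : ℕ) : ℕ := Nat.find (Nat.exists_infinite_primes n)

/-- The weighted sum `Σ_{k=1}^n k·x_k` of a Boolean vector `X = (x_1, …, x_n)`. -/
def weightedSum {n : ℕ} (X : Fin n → Bool) : ℕ :=
  ∑ k : Fin n, (k.val + 1) * (if X k then 1 else 0)

/-- `s(X)`: the unique integer with `1 ≤ s(X) ≤ p` and
`s(X) ≡ Σ_{k=1}^n k·x_k (mod p)`, where `p` is the least prime `≥ n`. -/
def sVal {n : ℕ} (X : Fin n → Bool) : ℕ :=
  if weightedSum X % leastPrime n = 0 then leastPrime n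
  else weightedSum X % leastPrime n

/-- The laced Boolean function (weighted sum function):
`f(X) = x_{s(X)}` if `1 ≤ s(X) ≤ n`, and `f(X) = x_1` otherwise.
(For `n = 0` there are no variables and we set the value to `false`.) -/
def laced {n : ℕ} (X : Fin n → Bool) : Bool :=
  if h : 1 ≤ sVal X ∧ sVal X ≤ n then X ⟨sVal X - 1, by omega⟩
  else if h0 : 0 < n then X ⟨0, h0⟩ else false

/-!
Let `p = 2K + 1` be the least prime `≥ n`. On the fibre `s(X) = m` the function is a single
coordinate `x_i`, so the fibre contributes the number of `X` with `x_i = 1` and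
`Σ k x_k ≡ m (mod p)`. Averaging over the `p`-th roots of unity, this is `2^(n-1)/p` up to an
error bounded by the exponential sums `|ξ^i ∏_{k ≠ i} (1 + ξ^k)|`, `ξ ≠ 1`. Evaluating
`X^p - 1 = ∏ (X - ξ^k)` at `-1` gives `∏_{k=1}^{p-1} (1 + ξ^k) = 1`, and
`|1 + ξ^k| = |1 + ξ^(p-k)|`, so already `∏_{k=1}^{K} |1 + ξ^k| = 1`. By Bertrand `K < n`, so
the product over `k ≤ n` is at most `2^(n-K)`, while `|1 + ξ^i| ≥ 2/p`. Summing over the `p`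
fibres, `|wt(f_n) - 2^(n-1)| ≤ p² 2^(n-K-1)`, which is `o(2^(n-1))`.
-/

open Filter Topology Real

namespace IsPrimitiveRoot

variable {ζ : ℂ} {p K : ℕ}

theorem geom_sum_div_pow_eq_ite (hζ : IsPrimitiveRoot ζ p) (a m : ℕ) :
    ∑ t ∈ range p, (ζ ^ a / ζ ^ m) ^ t = if a ≡ m [MOD p] then (p : ℂ) else 0 := by
  rcases p.eq_zero_or_pos with rfl | hp
  · simp
  have hζ0 : ζ ≠ 0 := hζ.ne_zero hp.ne'
  have hmod : ζ ^ a = ζ ^ m ↔ a ≡ m [MOD p] := by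
    rw [hζ.eq_orderOf]
    exact (hζ.isOfFinOrder hp.ne').pow_eq_pow_iff_modEq
  split_ifs with h
  · simp [hmod.2 h, hζ0]
  · have hne : ζ ^ a / ζ ^ m ≠ 1 := fun h' =>
      h (hmod.1 ((div_eq_one_iff_eq (pow_ne_zero _ hζ0)).1 h'))
    rw [geom_sum_eq hne, div_pow, ← pow_mul, ← pow_mul, mul_comm a, mul_comm m, pow_mul,
      pow_mul, hζ.pow_eq_one]
    simp

theorem abs_card_filter_modEq_sub_le {ι : Type*} (hζ : IsPrimitiveRoot ζ p) (hp : 1 < p)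
    (s : Finset ι) (f : ι → ℕ) (m : ℕ) {B : ℝ}
    (hB : ∀ t ∈ Ico 1 p, ‖∑ x ∈ s, (ζ ^ t) ^ f x‖ ≤ B) :
    |(#{x ∈ s | f x ≡ m [MOD p]} : ℝ) - #s / p| ≤ B := by
  have hζ1 : ‖ζ‖ = 1 := hζ.norm'_eq_one (by omega)
  have hpR : (0 : ℝ) < p := by exact_mod_cast (by omega : 0 < p)
  have hcount : (#{x ∈ s | f x ≡ m [MOD p]} : ℂ) * p
      = ∑ t ∈ range p, (ζ ^ m)⁻¹ ^ t * ∑ x ∈ s, (ζ ^ t) ^ f x := by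
    rw [card_filter, Nat.cast_sum, sum_mul]
    simp_rw [mul_sum]
    rw [sum_comm]
    refine sum_congr rfl fun x _ => ?_
    rw [Nat.cast_ite, Nat.cast_one, Nat.cast_zero, ite_mul, one_mul, zero_mul,
      ← hζ.geom_sum_div_pow_eq_ite]
    refine sum_congr rfl fun t _ => ?_
    rw [div_eq_mul_inv, mul_pow, ← pow_mul, ← pow_mul, mul_comm, mul_comm t]
  have herr : (#{x ∈ s | f x ≡ m [MOD p]} : ℂ) * p - #s
      = ∑ t ∈ Ico 1 p, (ζ ^ m)⁻¹ ^ t * ∑ x ∈ s, (ζ ^ t) ^ f x := by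
    rw [hcount, range_eq_Ico, sum_eq_sum_Ico_succ_bot (by omega)]
    simp
  have hB' : ‖(#{x ∈ s | f x ≡ m [MOD p]} : ℂ) * p - #s‖ ≤ p * B := by
    rw [herr]
    calc _ ≤ ∑ t ∈ Ico 1 p, ‖(ζ ^ m)⁻¹ ^ t * ∑ x ∈ s, (ζ ^ t) ^ f x‖ :=
          norm_sum_le _ _
      _ ≤ ∑ _t ∈ Ico 1 p, B := sum_le_sum fun t ht => by
          simpa [hζ1] using hB t ht
      _ ≤ p * B := by
          have : 0 ≤ B := (norm_nonneg _).trans (hB 1 (by simp; omega))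
          rw [sum_const, Nat.card_Ico, nsmul_eq_mul]
          gcongr
          exact_mod_cast Nat.sub_le p 1
  have hreal : (#{x ∈ s | f x ≡ m [MOD p]} : ℂ) * p - #s
      = (((#{x ∈ s | f x ≡ m [MOD p]} : ℝ) - #s / p) * p : ℝ) := by
    push_cast
    rw [sub_mul, div_mul_cancel₀ _ (by exact_mod_cast hpR.ne')]
  rw [hreal, Complex.norm_real, Real.norm_eq_abs, abs_mul, Nat.abs_cast] at hB'
  exact le_of_mul_le_mul_right (by linarith) hpR

theorem norm_one_add_pow_eq_of_add_eq {a b : ℕ} (hζ : IsPrimitiveRoot ζ p) (hab : a + b = p) :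
    ‖1 + ζ ^ a‖ = ‖1 + ζ ^ b‖ := by
  rcases Nat.eq_zero_or_pos p with rfl | hp
  · obtain ⟨rfl, rfl⟩ : a = 0 ∧ b = 0 := by omega
    rfl
  have hinv : ζ ^ b = (ζ ^ a)⁻¹ :=
    eq_inv_of_mul_eq_one_right (by rw [← pow_add, hab, hζ.pow_eq_one])
  have hnorm : ‖ζ ^ a‖ = 1 := by rw [norm_pow, hζ.norm'_eq_one hp.ne', one_pow]
  have hne : ζ ^ a ≠ 0 := norm_ne_zero_iff.1 (by rw [hnorm]; exact one_ne_zero)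
  rw [hinv, show (1 : ℂ) + (ζ ^ a)⁻¹ = (ζ ^ a + 1) * (ζ ^ a)⁻¹ by field_simp, norm_mul,
    norm_inv, hnorm, inv_one, mul_one, add_comm]

theorem prod_range_one_add_pow_succ_eq_one (hζ : IsPrimitiveRoot ζ (2 * K + 1)) :
    ∏ k ∈ range (2 * K), (1 + ζ ^ (k + 1)) = 1 := by
  have h := congrArg (Polynomial.eval (-1)) (X_pow_sub_C_eq_prod hζ (by omega) (one_pow _))
  simp only [Polynomial.eval_sub, Polynomial.eval_pow, Polynomial.eval_X, Polynomial.eval_C,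
    Polynomial.eval_prod, mul_one] at h
  rw [prod_range_succ', pow_zero, Odd.neg_one_pow (odd_two_mul_add_one K)] at h
  have hneg : ∏ k ∈ range (2 * K), (-1 - ζ ^ (k + 1))
      = ∏ k ∈ range (2 * K), (1 + ζ ^ (k + 1)) := by
    simp_rw [show ∀ k : ℕ, (-1 : ℂ) - ζ ^ (k + 1) = -(1 + ζ ^ (k + 1)) from
      fun k => by ring]
    rw [prod_neg, card_range, (even_two_mul K).neg_one_pow, one_mul]
  rw [hneg] at h
  linear_combination h / 2

theorem prod_range_norm_one_add_pow_succ_eq_one (hζ : IsPrimitiveRoot ζ (2 * K + 1)) :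
    ∏ k ∈ range K, ‖1 + ζ ^ (k + 1)‖ = 1 := by
  set g : ℕ → ℝ := fun k => ‖1 + ζ ^ (k + 1)‖
  have hfull : (∏ k ∈ range K, g k) * ∏ k ∈ range K, g k = 1 := by
    have hsymm : ∏ k ∈ range K, g (K + k) = ∏ k ∈ range K, g k := by
      rw [← prod_range_reflect g K]
      refine prod_congr rfl fun k hk => hζ.norm_one_add_pow_eq_of_add_eq ?_
      simp only [mem_range] at hk
      omega
    calc (∏ k ∈ range K, g k) * ∏ k ∈ range K, g k
        = (∏ k ∈ range K, g k) * ∏ k ∈ range K, g (K + k) := by rw [hsymm]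
      _ = ‖∏ k ∈ range (2 * K), (1 + ζ ^ (k + 1))‖ := by
          rw [← prod_range_add, norm_prod, two_mul]
      _ = 1 := by rw [hζ.prod_range_one_add_pow_succ_eq_one, norm_one]
  have hnonneg : 0 ≤ ∏ k ∈ range K, g k := prod_nonneg fun _ _ => norm_nonneg _
  nlinarith

theorem prod_range_norm_one_add_pow_succ_le (hζ : IsPrimitiveRoot ζ (2 * K + 1)) {N : ℕ}
    (hKN : K ≤ N) : ∏ k ∈ range N, ‖1 + ζ ^ (k + 1)‖ ≤ 2 ^ (N - K) := by
  rw [← prod_range_mul_prod_Ico _ hKN, hζ.prod_range_norm_one_add_pow_succ_eq_one, one_mul,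
    ← Nat.card_Ico K N, ← prod_const]
  refine prod_le_prod (fun _ _ => norm_nonneg _) fun k _ => ?_
  calc ‖1 + ζ ^ (k + 1)‖ ≤ ‖(1 : ℂ)‖ + ‖ζ ^ (k + 1)‖ := norm_add_le _ _
    _ = 2 := by rw [norm_pow, hζ.norm'_eq_one (by omega)]; norm_num

end IsPrimitiveRoot

theorem Real.two_div_le_sin_pi_mul_div {a p : ℕ} (ha : 0 < a) (hap : a < p) :
    2 / p ≤ Real.sin (π * a / p) := by
  wlog h : 2 * a ≤ p generalizing a
  · have := this (a := p - a) (by omega) (by omega) (by omega)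
    rwa [Nat.cast_sub hap.le, mul_sub, sub_div,
      mul_div_cancel_right₀ _ (by exact_mod_cast (ha.trans hap).ne'), Real.sin_pi_sub] at this
  have hp : (0 : ℝ) < p := by exact_mod_cast ha.trans hap
  have ha' : (1 : ℝ) ≤ a := by exact_mod_cast ha
  have h' : 2 * (a : ℝ) ≤ p := by exact_mod_cast h
  calc 2 / (p : ℝ) ≤ 2 / π * (π * a / p) := by
        rw [div_mul_div_comm, mul_left_comm, mul_div_mul_left _ _ Real.pi_ne_zero]
        gcongr
        linarith
    _ ≤ Real.sin (π * a / p) := Real.mul_le_sin (by positivity) (by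
        rw [div_le_div_iff₀ hp two_pos]
        nlinarith [Real.pi_pos])

theorem Complex.two_div_le_norm_one_add {p : ℕ} (hp : Odd p) {w : ℂ} (hw : w ^ p = 1) :
    2 / p ≤ ‖1 + w‖ := by
  have hp0 : 0 < p := hp.pos
  have : NeZero p := ⟨hp0.ne'⟩
  have hζ := Complex.isPrimitiveRoot_exp p hp0.ne'
  obtain ⟨i, hi, rfl⟩ := hζ.eq_pow_of_pow_eq_one hw
  clear hw
  wlog h : 2 * i < p generalizing i
  · have hodd : 2 * i ≠ p := fun h' => (Nat.not_even_iff_odd.2 hp) ⟨i, by omega⟩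
    rw [hζ.norm_one_add_pow_eq_of_add_eq (b := p - i) (by omega)]
    exact this (p - i) (by omega) (by omega)
  rcases Nat.eq_zero_or_pos i with rfl | hi0
  · have : (1 : ℝ) ≤ p := by exact_mod_cast hp0
    rw [pow_zero, one_add_one_eq_two, Complex.norm_two]
    exact div_le_self zero_le_two this
  have him : (1 + Complex.exp (2 * π * Complex.I / p) ^ i).im
      = Real.sin (π * (2 * i : ℕ) / p) := by
    rw [← Complex.exp_nat_mul, show (i : ℂ) * (2 * π * Complex.I / p)
      = ((π * (2 * i : ℕ) / p : ℝ) : ℂ) * Complex.I by push_cast; ring, Complex.add_im,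
      Complex.one_im, zero_add, Complex.exp_ofReal_mul_I_im]
  calc 2 / (p : ℝ) ≤ Real.sin (π * (2 * i : ℕ) / p) :=
        Real.two_div_le_sin_pi_mul_div (by omega) h
    _ ≤ |(1 + Complex.exp (2 * π * Complex.I / p) ^ i).im| := by rw [him]; exact le_abs_self _
    _ ≤ _ := Complex.abs_im_le_norm _

theorem sum_filter_pow_weightedSum {R : Type*} [CommSemiring R] {n : ℕ} (ξ : R) (j : Fin n) :
    ∑ X ∈ {X : Fin n → Bool | X j = true}, ξ ^ weightedSum X
      = ξ ^ (j.val + 1) * ∏ k ∈ univ.erase j, (1 + ξ ^ (k.val + 1)) := by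
  set t : Fin n → Finset Bool := fun k => if k = j then {true} else univ
  have hfilter : ({X | X j = true} : Finset (Fin n → Bool)) = Fintype.piFinset t := by
    ext X
    simp only [mem_filter, mem_univ, true_and, Fintype.mem_piFinset, t]
    refine ⟨fun hX k => ?_, fun hX => by simpa using hX j⟩
    split_ifs with hk
    · simp [hk, hX]
    · exact mem_univ _
  have hpow : ∀ X : Fin n → Bool,
      ξ ^ weightedSum X = ∏ k, (if X k then ξ ^ (k.val + 1) else 1) := by
    intro X
    rw [weightedSum, ← prod_pow_eq_pow_sum]
    exact prod_congr rfl fun k _ => by cases X k <;> simp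
  simp_rw [hfilter, hpow]
  rw [← prod_univ_sum t fun k b => if b then ξ ^ (k.val + 1) else 1,
    ← mul_prod_erase univ _ (mem_univ j)]
  congr 1
  · simp [t]
  · refine prod_congr rfl fun k hk => ?_
    simp [t, ne_of_mem_erase hk, add_comm]

theorem card_filter_apply_eq_true {n : ℕ} (j : Fin n) :
    #{X : Fin n → Bool | X j = true} = 2 ^ (n - 1) := by
  simpa [card_erase_of_mem] using sum_filter_pow_weightedSum (1 : ℕ) j

theorem IsPrimitiveRoot.norm_sum_filter_pow_weightedSum_le {K n : ℕ} {ξ : ℂ}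
    (hξ : IsPrimitiveRoot ξ (2 * K + 1)) (hK : K ≤ n) (j : Fin n) :
    ‖∑ X ∈ {X : Fin n → Bool | X j = true}, ξ ^ weightedSum X‖
      ≤ (2 * K + 1) * 2 ^ (n - K) / 2 := by
  set g : ℕ → ℝ := fun k => ‖1 + ξ ^ (k + 1)‖
  have hfull : g j * ∏ k ∈ univ.erase j, g k ≤ 2 ^ (n - K) := by
    rw [mul_prod_erase univ (fun k : Fin n => g k) (mem_univ j), Fin.prod_univ_eq_prod_range g]
    exact hξ.prod_range_norm_one_add_pow_succ_le hK
  have hj : 2 / (2 * K + 1 : ℕ) ≤ g j := Complex.two_div_le_norm_one_add (odd_two_mul_add_one K)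
    (by rw [← pow_mul, mul_comm, pow_mul, hξ.pow_eq_one, one_pow])
  rw [sum_filter_pow_weightedSum, norm_mul, norm_pow, hξ.norm'_eq_one (by omega), one_pow,
    one_mul, norm_prod]
  have hP : 0 ≤ ∏ k ∈ univ.erase j, g k := prod_nonneg fun _ _ => norm_nonneg _
  push_cast at hj
  rw [le_div_iff₀ two_pos]
  calc (∏ k ∈ univ.erase j, g k) * 2
      = (2 * K + 1) * (2 / (2 * K + 1) * ∏ k ∈ univ.erase j, g k) := by field_simp
    _ ≤ (2 * K + 1) * 2 ^ (n - K) := by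
        gcongr
        exact (mul_le_mul_of_nonneg_right hj hP).trans hfull

theorem leastPrime_prime (n : ℕ) : (leastPrime n).Prime :=
  (Nat.find_spec (Nat.exists_infinite_primes n)).2

theorem le_leastPrime (n : ℕ) : n ≤ leastPrime n :=
  (Nat.find_spec (Nat.exists_infinite_primes n)).1

theorem leastPrime_le_two_mul {n : ℕ} (hn : n ≠ 0) : leastPrime n ≤ 2 * n := by
  obtain ⟨q, hq, hnq, hq2n⟩ := Nat.exists_prime_lt_and_le_two_mul n hn
  exact (Nat.find_min' _ ⟨hnq.le, hq⟩).trans hq2n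

theorem tendsto_leastPrime_atTop : Tendsto leastPrime atTop atTop :=
  tendsto_atTop_mono le_leastPrime tendsto_id

theorem sVal_mem_Icc {n : ℕ} (X : Fin n → Bool) : sVal X ∈ Icc 1 (leastPrime n) := by
  have hp := (leastPrime_prime n).pos
  have := Nat.mod_lt (weightedSum X) hp
  rw [mem_Icc, sVal]
  split_ifs <;> omega

theorem sVal_eq_iff_modEq {n m : ℕ} (X : Fin n → Bool) (hm : m ∈ Icc 1 (leastPrime n)) :
    sVal X = m ↔ weightedSum X ≡ m [MOD leastPrime n] := by
  have := Nat.mod_lt (weightedSum X) (leastPrime_prime n).pos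
  rw [mem_Icc] at hm
  rw [sVal, Nat.ModEq]
  rcases hm.2.lt_or_eq with hlt | rfl
  · rw [Nat.mod_eq_of_lt hlt]
    split_ifs <;> omega
  · rw [Nat.mod_self]
    split_ifs <;> omega

theorem exists_laced_eq_of_sVal_eq {n : ℕ} (hn : 0 < n) (m : ℕ) :
    ∃ i : Fin n, ∀ X : Fin n → Bool, sVal X = m → laced X = X i := by
  by_cases hm : 1 ≤ m ∧ m ≤ n
  · exact ⟨⟨m - 1, by omega⟩, fun X hX => by subst hX; simp [laced, hm]⟩
  · exact ⟨⟨0, hn⟩, fun X hX => by subst hX; simp [laced, hm, hn]⟩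

theorem abs_card_filter_sVal_sub_le {n K : ℕ} (hp : leastPrime n = 2 * K + 1) (hK : K ≤ n)
    (i : Fin n) {m : ℕ} (hm : m ∈ Icc 1 (leastPrime n)) :
    |(#{X : Fin n → Bool | X i = true ∧ sVal X = m} : ℝ) - 2 ^ (n - 1) / (2 * K + 1 : ℕ)|
      ≤ (2 * K + 1) * 2 ^ (n - K) / 2 := by
  have hprime : (2 * K + 1).Prime := hp ▸ leastPrime_prime n
  have hζ := Complex.isPrimitiveRoot_exp (2 * K + 1) (by omega)
  have hfilter : ({X | X i = true ∧ sVal X = m} : Finset (Fin n → Bool))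
      = ({X | X i = true} : Finset (Fin n → Bool)).filter
          fun X => weightedSum X ≡ m [MOD 2 * K + 1] := by
    rw [filter_filter, ← hp]
    simp_rw [sVal_eq_iff_modEq _ hm]
  have := hζ.abs_card_filter_modEq_sub_le hprime.one_lt {X : Fin n → Bool | X i = true}
    weightedSum m fun t ht => (hζ.pow_of_coprime t ?_).norm_sum_filter_pow_weightedSum_le hK i
  · rwa [card_filter_apply_eq_true, Nat.cast_pow, Nat.cast_ofNat, ← hfilter] at this
  · simp only [mem_Ico] at ht
    exact Nat.coprime_comm.1 ((Nat.Prime.coprime_iff_not_dvd hprime).2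
      (Nat.not_dvd_of_pos_of_lt ht.1 ht.2))

theorem abs_card_laced_sub_le {n K : ℕ} (hn : 0 < n) (hp : leastPrime n = 2 * K + 1)
    (hK : K ≤ n) :
    |(#{X : Fin n → Bool | laced X = true} : ℝ) - 2 ^ (n - 1)|
      ≤ (2 * K + 1) ^ 2 * 2 ^ (n - K) / 2 := by
  have hfiber : #{X : Fin n → Bool | laced X = true}
      = ∑ m ∈ Icc 1 (leastPrime n), #{X : Fin n → Bool | laced X = true ∧ sVal X = m} := by
    rw [card_eq_sum_card_fiberwise fun X _ => sVal_mem_Icc X]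
    simp_rw [filter_filter]
  have hm : ∀ m ∈ Icc 1 (leastPrime n),
      |(#{X : Fin n → Bool | laced X = true ∧ sVal X = m} : ℝ)
          - 2 ^ (n - 1) / (2 * K + 1 : ℕ)| ≤ (2 * K + 1) * 2 ^ (n - K) / 2 := by
    intro m hm
    obtain ⟨i, hi⟩ := exists_laced_eq_of_sVal_eq hn m
    have hfilter : (univ.filter fun X : Fin n → Bool => laced X = true ∧ sVal X = m)
        = univ.filter fun X : Fin n → Bool => X i = true ∧ sVal X = m :=
      filter_congr fun X _ =>
        ⟨fun h => ⟨hi X h.2 ▸ h.1, h.2⟩, fun h => ⟨hi X h.2 ▸ h.1, h.2⟩⟩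
    rw [hfilter]
    exact abs_card_filter_sVal_sub_le hp hK i hm
  calc |(#{X : Fin n → Bool | laced X = true} : ℝ) - 2 ^ (n - 1)|
      = |∑ m ∈ Icc 1 (leastPrime n),
          ((#{X : Fin n → Bool | laced X = true ∧ sVal X = m} : ℝ)
            - 2 ^ (n - 1) / (2 * K + 1 : ℕ))| := by
        rw [hfiber, Nat.cast_sum, sum_sub_distrib, sum_const, Nat.card_Icc, hp, nsmul_eq_mul,
          Nat.add_sub_cancel, mul_div_cancel₀ _ (by positivity)]
    _ ≤ ∑ m ∈ Icc 1 (leastPrime n), ((2 * K + 1) * 2 ^ (n - K) / 2 : ℝ) :=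
        (abs_sum_le_sum_abs _ _).trans (sum_le_sum hm)
    _ = (2 * K + 1) ^ 2 * 2 ^ (n - K) / 2 := by
        rw [sum_const, Nat.card_Icc, hp, nsmul_eq_mul]
        push_cast
        ring

theorem abs_card_laced_div_sub_one_le {n : ℕ} (hn : 3 ≤ n) :
    |(#{X : Fin n → Bool | laced X = true} : ℝ) / 2 ^ (n - 1) - 1|
      ≤ (leastPrime n : ℝ) ^ 2 / 2 ^ ((leastPrime n - 1) / 2) := by
  obtain ⟨K, hK⟩ : Odd (leastPrime n) :=
    (leastPrime_prime n).odd_of_ne_two (by have := le_leastPrime n; omega)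
  have hKn : K ≤ n := by have := leastPrime_le_two_mul (n := n) (by omega); omega
  have hpow : (2 : ℝ) ^ (n - K) * 2 ^ K = 2 * 2 ^ (n - 1) := by
    rw [← pow_add, ← pow_succ']
    congr 1
    omega
  rw [hK, show (2 * K + 1 - 1) / 2 = K by omega, div_sub_one (by positivity), abs_div,
    abs_of_pos (a := (2 : ℝ) ^ (n - 1)) (by positivity),
    div_le_div_iff₀ (by positivity) (by positivity)]
  calc |(#{X : Fin n → Bool | laced X = true} : ℝ) - 2 ^ (n - 1)| * 2 ^ K
      ≤ (2 * K + 1) ^ 2 * 2 ^ (n - K) / 2 * 2 ^ K := by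
        gcongr
        exact abs_card_laced_sub_le (by omega) hK hKn
    _ = ((2 * K + 1 : ℕ) : ℝ) ^ 2 * 2 ^ (n - 1) := by
        rw [mul_div_right_comm, mul_assoc, hpow]
        push_cast
        ring

theorem tendsto_sq_div_two_pow_half_atTop :
    Tendsto (fun p : ℕ => (p : ℝ) ^ 2 / 2 ^ ((p - 1) / 2)) atTop (𝓝 0) := by
  have hlim := (tendsto_pow_const_div_const_pow_of_one_lt 2 one_lt_sqrt_two).const_mul 2
  rw [mul_zero] at hlim
  refine squeeze_zero (fun p => by positivity) (fun p => ?_) hlim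
  have hsqrt : √2 ^ p ≤ 2 ^ ((p - 1) / 2) * 2 := by
    calc √2 ^ p ≤ √2 ^ (2 * ((p - 1) / 2 + 1)) :=
          pow_le_pow_right₀ one_lt_sqrt_two.le (by omega)
      _ = 2 ^ ((p - 1) / 2) * 2 := by rw [pow_mul, sq_sqrt zero_le_two, pow_succ]
  calc (p : ℝ) ^ 2 / 2 ^ ((p - 1) / 2)
        = 2 * ((p : ℝ) ^ 2 / (2 ^ ((p - 1) / 2) * 2)) := by field_simp
    _ ≤ 2 * ((p : ℝ) ^ 2 / √2 ^ p) := by gcongr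

/-- The weight of the laced Boolean function on `n` variables satisfies
`wt(f_n) = 2^{n-1}(1 + o(1))` as `n → ∞`; i.e. `wt(f_n)/2^{n-1} → 1`.
In particular, `f_n` is asymptotically balanced. -/
theorem weight_laced_asymptotic :
    Filter.Tendsto (fun n : ℕ =>
        ((Finset.univ.filter (fun X : Fin n → Bool => laced X = true)).card : ℝ) /
          2 ^ (n - 1))
      Filter.atTop (nhds 1) := by
  have hbound : ∀ᶠ n in atTop,
      ‖(#{X : Fin n → Bool | laced X = true} : ℝ) / 2 ^ (n - 1) - 1‖
        ≤ (leastPrime n : ℝ) ^ 2 / 2 ^ ((leastPrime n - 1) / 2) :=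
    eventually_atTop.2 ⟨3, fun n hn => abs_card_laced_div_sub_one_le hn⟩
  exact tendsto_sub_nhds_zero_iff.1
    (squeeze_zero_norm' hbound (tendsto_sq_div_two_pow_half_atTop.comp tendsto_leastPrime_atTop))
end
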